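/- Let μ > 0. For t ∈ ℝ and 0 < r < μ define u(t,r) = √(μ-r) · exp((r+t)/(2μ)), v(t,r) = -√(μ-r) · exp((r-t)/(2μ)), and F(r) = (4μ²/r) · exp(-r/μ). Then for all t ∈ ℝ and 0 < r < μ: (i) u(t,r)·v(t,r) = (r-μ)·exp(r/μ); (ii) F(r) · (∂u/∂t)(t,r) · (∂v/∂t)(t,r) = -(1 - μ/r); (iii) F(r) · (∂u/∂r)(t,r) · (∂v/∂r)(t,r) = 1/(1 - μ/r); (iv) (∂u/∂t)(t,r)·(∂v/∂r)(t,r) + (∂u/∂r)(t,r)·(∂v/∂t)(t,r) = 0. Here ∂u/∂t denotes the derivative of t ↦ u(t,r) and ∂u/∂r the derivative of r ↦ u(t,r), and similarly for v. -/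

import Mathlib

/-- Kruskal-Szekeres coordinate `u` on the black-hole region. -/
noncomputable def uKS (μ t r : ℝ) : ℝ :=
  Real.sqrt (μ - r) * Real.exp ((r + t) / (2 * μ))

/-- Kruskal-Szekeres coordinate `v` on the black-hole region. -/
noncomputable def vKS (μ t r : ℝ) : ℝ :=
  -(Real.sqrt (μ - r) * Real.exp ((r - t) / (2 * μ)))

/-- Kruskal-Szekeres conformal factor `F`. -/
noncomputable def FKS (μ r : ℝ) : ℝ :=
  (4 * μ ^ 2 / r) * Real.exp (-r / μ)

/-- The isometry identities between the black-hole region of the Hilbert-Droste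
plane and the Kruskal-Szekeres plane. -/
theorem kruskal_isometry_identities_black_hole (μ : ℝ) (hμ : 0 < μ)
    (t r : ℝ) (hr0 : 0 < r) (hrμ : r < μ) :
    uKS μ t r * vKS μ t r = (r - μ) * Real.exp (r / μ) ∧
    FKS μ r * deriv (fun t' => uKS μ t' r) t * deriv (fun t' => vKS μ t' r) t
      = -(1 - μ / r) ∧
    FKS μ r * deriv (fun r' => uKS μ t r') r * deriv (fun r' => vKS μ t r') r
      = 1 / (1 - μ / r) ∧
    deriv (fun t' => uKS μ t' r) t * deriv (fun r' => vKS μ t r') r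
      + deriv (fun r' => uKS μ t r') r * deriv (fun t' => vKS μ t' r) t = 0 := by
  have hμr : (0:ℝ) < μ - r := by linarith
  set s := Real.sqrt (μ - r) with hs_def
  have hs2 : s ^ 2 = μ - r := Real.sq_sqrt hμr.le
  have hspos : 0 < s := Real.sqrt_pos.mpr hμr
  have hs0 : s ≠ 0 := hspos.ne'
  have hμ0 : μ ≠ 0 := hμ.ne'
  have hr0' : r ≠ 0 := hr0.ne'
  set E1 := Real.exp ((r + t) / (2 * μ)) with hE1_def
  set E2 := Real.exp ((r - t) / (2 * μ)) with hE2_def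
  have hE : E1 * E2 = Real.exp (r / μ) := by
    rw [hE1_def, hE2_def, ← Real.exp_add]
    congr 1
    field_simp
    ring
  have hEneg : Real.exp (-r / μ) * Real.exp (r / μ) = 1 := by
    rw [← Real.exp_add]; ring_nf; simp
  -- t-derivatives
  have hut : HasDerivAt (fun t' => uKS μ t' r) (s * (E1 * (1 / (2 * μ)))) t := by
    have h1 : HasDerivAt (fun t' : ℝ => (r + t') / (2 * μ)) (1 / (2 * μ)) t := by
      simpa using ((hasDerivAt_id t).const_add r).div_const (2 * μ)
    exact h1.exp.const_mul s
  have hvt : HasDerivAt (fun t' => vKS μ t' r) (-(s * (E2 * (-1 / (2 * μ))))) t := by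
    have h1 : HasDerivAt (fun t' : ℝ => (r - t') / (2 * μ)) (-1 / (2 * μ)) t := by
      simpa using ((hasDerivAt_id t).const_sub r).div_const (2 * μ)
    exact (h1.exp.const_mul s).neg
  -- r-derivatives
  have hsq : HasDerivAt (fun r' => Real.sqrt (μ - r')) (-1 / (2 * s)) r := by
    have h1 : HasDerivAt (fun r' : ℝ => μ - r') (-1) r := by
      simpa using (hasDerivAt_id r).const_sub μ
    exact h1.sqrt hμr.ne'
  have hur : HasDerivAt (fun r' => uKS μ t r')
      (-1 / (2 * s) * E1 + s * (E1 * (1 / (2 * μ)))) r := by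
    have h1 : HasDerivAt (fun r' : ℝ => (r' + t) / (2 * μ)) (1 / (2 * μ)) r := by
      simpa using ((hasDerivAt_id r).add_const t).div_const (2 * μ)
    exact hsq.mul h1.exp
  have hvr : HasDerivAt (fun r' => vKS μ t r')
      (-(-1 / (2 * s) * E2 + s * (E2 * (1 / (2 * μ))))) r := by
    have h1 : HasDerivAt (fun r' : ℝ => (r' - t) / (2 * μ)) (1 / (2 * μ)) r := by
      simpa using ((hasDerivAt_id r).sub_const t).div_const (2 * μ)
    exact (hsq.mul h1.exp).neg
  rw [hut.deriv, hvt.deriv, hur.deriv, hvr.deriv]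
  refine ⟨?_, ?_, ?_, ?_⟩
  · show s * E1 * -(s * E2) = _
    have : s * E1 * -(s * E2) = -(s ^ 2) * (E1 * E2) := by ring
    rw [this, hE, hs2]; ring
  · show FKS μ r * _ * _ = _
    rw [FKS]
    have key : 4 * μ ^ 2 / r * Real.exp (-r / μ) * (s * (E1 * (1 / (2 * μ)))) *
        -(s * (E2 * (-1 / (2 * μ)))) =
        s ^ 2 / r * (Real.exp (-r / μ) * (E1 * E2)) := by
      field_simp
      ring
    rw [key, hE, hEneg, hs2]
    field_simp
    ring
  · rw [FKS]
    have key : 4 * μ ^ 2 / r * Real.exp (-r / μ) *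
        (-1 / (2 * s) * E1 + s * (E1 * (1 / (2 * μ)))) *
        -(-1 / (2 * s) * E2 + s * (E2 * (1 / (2 * μ)))) =
        -(((s^2 - μ) ^ 2 / (s ^ 2 * r)) * (Real.exp (-r / μ) * (E1 * E2))) := by
      field_simp
      ring
    rw [key, hE, hEneg, hs2]
    have h1 : (μ - r - μ) ^ 2 = r ^ 2 := by ring
    rw [h1]
    have hrm : r - μ ≠ 0 := by linarith
    have h2 : (1:ℝ) - μ / r = (r - μ) / r := by field_simp
    rw [h2]
    field_simp
    ring
  · have key : s * (E1 * (1 / (2 * μ))) * -(-1 / (2 * s) * E2 + s * (E2 * (1 / (2 * μ)))) +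
        (-1 / (2 * s) * E1 + s * (E1 * (1 / (2 * μ)))) * -(s * (E2 * (-1 / (2 * μ)))) = 0 := by
      field_simp
      ring
    exact key
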